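/- Fix x ∈ M, let α, β be closed smooth 1-forms on M, and suppose X_α is a smooth vector field near x with X_α(x) = α♯(x) and L_{X_α}β = 0. Then the iterated directional derivative of ‖β‖² := g⁻¹(β,β) along α♯ satisfies at x: α♯α♯(‖β‖²)(x) = (L_{X_α}² (g⁻¹))(β,β)(x) + ⟨ D_x(α♯ − X_α).X_α(x), d(‖β‖²)(x) ⟩, where L_{X_α}²(g⁻¹) is the second Lie derivative of the co-metric tensor along X_α, and for a vector field Z vanishing at x, D_x Z ∈ Hom(T_xM,T_xM) is its derivative at x characterized by D_x Z . Y_x = [Y,Z](x). -/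

import Mathlib

/-!
Local-coordinate (chart) model of a Riemannian manifold: points are elements
of `ℝⁿ`, vector fields and 1-forms are given by their component functions on
an open set `U`, and the metric by its matrix of components.
-/

noncomputable section

namespace RG

/-- Points of the chart. -/
abbrev Pt (n : ℕ) : Type := Fin n → ℝ
/-- Vector fields, by components. -/
abbrev VF (n : ℕ) : Type := Pt n → Fin n → ℝ
/-- 1-forms, by components. -/
abbrev OneForm (n : ℕ) : Type := Pt n → Fin n → ℝ
/-- Metric tensors, by components. -/
abbrev Met (n : ℕ) : Type := Pt n → Matrix (Fin n) (Fin n) ℝ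

variable {n : ℕ}

/-- Partial derivative `∂ₛ f`. -/
def pd (s : Fin n) (f : Pt n → ℝ) : Pt n → ℝ := fun x => fderiv ℝ f x (Pi.single s 1)

/-- Directional derivative `X f` of a function along a vector field. -/
def dder (X : VF n) (f : Pt n → ℝ) : Pt n → ℝ := fun x => fderiv ℝ f x (X x)

/-- Lie bracket `[X, Y]` of vector fields. -/
def bracket (X Y : VF n) : VF n :=
  fun x k => fderiv ℝ (fun y => Y y k) x (X x) - fderiv ℝ (fun y => X y k) x (Y x)

/-- The inverse (co-)metric `g⁻¹`. -/
def ginv (g : Met n) : Met n := fun x => (g x)⁻¹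

/-- Pairing `α(X)` of a 1-form with a vector field. -/
def pairF (α : OneForm n) (X : VF n) : Pt n → ℝ := fun x => ∑ i, α x i * X x i

/-- Metric inner product `g(X,Y)` of vector fields. -/
def gV (g : Met n) (X Y : VF n) : Pt n → ℝ := fun x => ∑ i, ∑ j, g x i j * X x i * Y x j

/-- Co-metric inner product `g⁻¹(α,β)` of 1-forms. -/
def gF (g : Met n) (α β : OneForm n) : Pt n → ℝ :=
  fun x => ∑ i, ∑ j, ginv g x i j * α x i * β x j

/-- Raising indices: `α♯ = g⁻¹ α`. -/
def sharp (g : Met n) (α : OneForm n) : VF n := fun x k => ∑ i, ginv g x i k * α x i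

/-- Lowering indices: `X♭ = g X`. -/
def flat (g : Met n) (X : VF n) : OneForm n := fun x k => ∑ i, g x i k * X x i

/-- Differential `df` of a function, as a 1-form. -/
def dF (f : Pt n → ℝ) : OneForm n := fun x i => pd i f x

/-- Exterior derivative of a 1-form, evaluated on two vector fields:
`dα(X,Y) = Σ (∂ᵢα_j − ∂_jαᵢ) Xⁱ Y^j`. -/
def dOne (α : OneForm n) (X Y : VF n) : Pt n → ℝ :=
  fun x => ∑ i, ∑ j, (pd i (fun y => α y j) x - pd j (fun y => α y i) x) * X x i * Y x j

/-- Christoffel symbols `Γ^k_{ij}` of the Levi-Civita connection. -/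
def chr (g : Met n) (k i j : Fin n) : Pt n → ℝ :=
  fun x => (1/2) * ∑ l, ginv g x k l *
    (pd i (fun y => g y j l) x + pd j (fun y => g y i l) x - pd l (fun y => g y i j) x)

/-- Levi-Civita covariant derivative `∇_X Y` of a vector field. -/
def covV (g : Met n) (X Y : VF n) : VF n :=
  fun x k => fderiv ℝ (fun y => Y y k) x (X x) + ∑ i, ∑ j, chr g k i j x * X x i * Y x j

/-- Levi-Civita covariant derivative `∇_X α` of a 1-form, characterized by
`(∇_X α)(Y) = X(α(Y)) − α(∇_X Y)`. -/
def covF (g : Met n) (X : VF n) (α : OneForm n) : OneForm n :=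
  fun x j => fderiv ℝ (fun y => α y j) x (X x) - ∑ i, ∑ k, X x i * chr g k i j x * α x k

/-- Riemann curvature tensor `R(X,Y)Z = ∇_X∇_Y Z − ∇_Y∇_X Z − ∇_{[X,Y]}Z`. -/
def Rcurv (g : Met n) (X Y Z : VF n) : VF n :=
  covV g X (covV g Y Z) - covV g Y (covV g X Z) - covV g (bracket X Y) Z

/-- Lie derivative of a 1-form along a vector field. -/
def lieF (X : VF n) (α : OneForm n) : OneForm n :=
  fun x i => fderiv ℝ (fun y => α y i) x (X x) + ∑ s, α x s * pd i (fun y => X y s) x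

/-- Lie derivative of a contravariant 2-tensor (such as the co-metric `g⁻¹`). -/
def lieCo (X : VF n) (G : Met n) : Met n :=
  fun x => Matrix.of fun i j =>
    fderiv ℝ (fun y => G y i j) x (X x)
      - ∑ s, G x s j * pd s (fun y => X y i) x
      - ∑ s, G x i s * pd s (fun y => X y j) x

/-- Evaluation of a contravariant 2-tensor on a pair of 1-forms. -/
def evCo (G : Met n) (α β : OneForm n) : Pt n → ℝ :=
  fun x => ∑ i, ∑ j, G x i j * α x i * β x j

/-- Smoothness of (the components of) a 1-form or vector field on `U`. -/
def SmoothSec (U : Set (Pt n)) (ω : Pt n → Fin n → ℝ) : Prop :=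
  ∀ i, ContDiffOn ℝ (⊤ : ℕ∞) (fun y => ω y i) U

/-- Smoothness of the metric components on `U`. -/
def SmoothMet (U : Set (Pt n)) (g : Met n) : Prop :=
  ∀ i j, ContDiffOn ℝ (⊤ : ℕ∞) (fun y => g y i j) U

/-- `g` is a smooth Riemannian metric on `U`. -/
def IsRiemannOn (U : Set (Pt n)) (g : Met n) : Prop :=
  SmoothMet U g ∧ ∀ x ∈ U, (g x).IsSymm ∧ (g x).PosDef

/-- A 1-form is closed on `U`. -/
def IsClosedOn (U : Set (Pt n)) (α : OneForm n) : Prop :=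
  ∀ x ∈ U, ∀ i j, pd i (fun y => α y j) x = pd j (fun y => α y i) x

end RG


open RG

section Helpers

variable {n : ℕ}

private theorem aux_contDiffAt_det {M : Pt n → Matrix (Fin n) (Fin n) ℝ} {x : Pt n}
    (h : ∀ i j, ContDiffAt ℝ (⊤ : ℕ∞) (fun y => M y i j) x) :
    ContDiffAt ℝ (⊤ : ℕ∞) (fun y => (M y).det) x := by
  have : (fun y => (M y).det)
      = fun y => ∑ σ : Equiv.Perm (Fin n),
          ((Equiv.Perm.sign σ : ℤ) : ℝ) * ∏ i, M y (σ i) i := by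
    funext y
    rw [Matrix.det_apply]
    simp [Units.smul_def, zsmul_eq_mul]
  rw [this]
  exact ContDiffAt.sum fun σ _ =>
    contDiffAt_const.mul (contDiffAt_prod fun i _ => h (σ i) i)

private theorem aux_ginv_contDiffAt {U : Set (Pt n)} (hU : IsOpen U) {g : Met n}
    (hg : IsRiemannOn U g) {x : Pt n} (hx : x ∈ U) (i j : Fin n) :
    ContDiffAt ℝ (⊤ : ℕ∞) (fun y => ginv g y i j) x := by
  have hent : ∀ k l, ContDiffAt ℝ (⊤ : ℕ∞) (fun y => g y k l) x := fun k l =>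
    ((hg.1 k l).contDiffAt (hU.mem_nhds hx)).of_le (by simp)
  have hdet : ContDiffAt ℝ (⊤ : ℕ∞) (fun y => (g y).det) x := aux_contDiffAt_det hent
  have hadj : ContDiffAt ℝ (⊤ : ℕ∞) (fun y => (g y).adjugate i j) x := by
    have h2 : (fun y => (g y).adjugate i j)
        = fun y => ((g y).updateRow j (Pi.single i 1)).det := by
      funext y; rw [Matrix.adjugate_apply]
    rw [h2]
    refine aux_contDiffAt_det fun k l => ?_
    rcases eq_or_ne k j with rfl | hk
    · simp only [Matrix.updateRow_self]
      exact contDiffAt_const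
    · simp only [Matrix.updateRow_ne hk]
      exact hent k l
  have hne : (g x).det ≠ 0 := (hg.2 x hx).2.det_pos.ne'
  have h3 : (fun y => ginv g y i j) = fun y => ((g y).det)⁻¹ * (g y).adjugate i j := by
    funext y
    simp [ginv, Matrix.inv_def, Ring.inverse_eq_inv']
  rw [h3]
  exact (hdet.inv hne).mul hadj

private theorem aux_swap3 (F : Fin n → Fin n → Fin n → ℝ) :
    ∑ i, ∑ j, ∑ s, F i j s = ∑ i, ∑ j, ∑ s, F s j i := by
  rw [Finset.sum_comm]
  rw [show (∑ j, ∑ i, ∑ s, F i j s) = ∑ j, ∑ s, ∑ i, F i j s from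
    Finset.sum_congr rfl fun j _ => Finset.sum_comm]
  rw [Finset.sum_comm]

private theorem aux_swap23 (F : Fin n → Fin n → Fin n → ℝ) :
    ∑ i, ∑ j, ∑ s, F i j s = ∑ i, ∑ j, ∑ s, F i s j :=
  Finset.sum_congr rfl fun i _ => Finset.sum_comm

private theorem aux_dder_evCo (G : Met n) (β X : OneForm n) (y : Pt n)
    (hG : ∀ i j, DifferentiableAt ℝ (fun z => G z i j) y)
    (hβ : ∀ i, DifferentiableAt ℝ (fun z => β z i) y)
    (hlie : lieF X β y = 0) :
    fderiv ℝ (evCo G β β) y (X y) = evCo (lieCo X G) β β y := by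
  have hterm : ∀ i j, DifferentiableAt ℝ (fun z => G z i j * β z i * β z j) y :=
    fun i j => ((hG i j).mul (hβ i)).mul (hβ j)
  have hβ' : ∀ i, fderiv ℝ (fun z => β z i) y (X y)
      = -∑ s, β y s * pd i (fun z => X z s) y := by
    intro i
    have h0 := congrFun hlie i
    simp only [lieF, Pi.zero_apply] at h0
    linarith
  have expand : fderiv ℝ (evCo G β β) y
      = ∑ i : Fin n, ∑ j : Fin n, fderiv ℝ (fun z => G z i j * β z i * β z j) y := by
    have h1 : evCo G β β = fun z => ∑ i, ∑ j, G z i j * β z i * β z j := rfl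
    rw [h1, fderiv_fun_sum fun i _ => DifferentiableAt.fun_sum fun j _ => hterm i j]
    exact Finset.sum_congr rfl fun i _ => fderiv_fun_sum fun j _ => hterm i j
  have key : ∀ i j, fderiv ℝ (fun z => G z i j * β z i * β z j) y (X y)
      = fderiv ℝ (fun z => G z i j) y (X y) * β y i * β y j
        + G y i j * (fderiv ℝ (fun z => β z i) y (X y)) * β y j
        + G y i j * β y i * (fderiv ℝ (fun z => β z j) y (X y)) := by
    intro i j
    rw [fderiv_fun_mul ((hG i j).fun_mul (hβ i)) (hβ j), fderiv_fun_mul (hG i j) (hβ i)]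
    simp only [ContinuousLinearMap.add_apply, ContinuousLinearMap.coe_smul',
      Pi.smul_apply, smul_eq_mul]
    ring
  have B_eq : ∑ i, ∑ j, G y i j * (-∑ s, β y s * pd i (fun z => X z s) y) * β y j
      = ∑ i, ∑ j, -((∑ s, G y s j * pd s (fun z => X z i) y) * β y i * β y j) := by
    have h := aux_swap3 (fun i j s => -(G y i j * (β y s * pd i (fun z => X z s) y) * β y j))
    calc ∑ i, ∑ j, G y i j * (-∑ s, β y s * pd i (fun z => X z s) y) * β y j
        = ∑ i, ∑ j, ∑ s, -(G y i j * (β y s * pd i (fun z => X z s) y) * β y j) := by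
          refine Finset.sum_congr rfl fun i _ => Finset.sum_congr rfl fun j _ => ?_
          rw [mul_neg, neg_mul, Finset.mul_sum, Finset.sum_mul, ← Finset.sum_neg_distrib]
      _ = ∑ i, ∑ j, ∑ s, -(G y s j * (β y i * pd s (fun z => X z i) y) * β y j) := h
      _ = ∑ i, ∑ j, -((∑ s, G y s j * pd s (fun z => X z i) y) * β y i * β y j) := by
          refine Finset.sum_congr rfl fun i _ => Finset.sum_congr rfl fun j _ => ?_
          rw [Finset.sum_mul, Finset.sum_mul, ← Finset.sum_neg_distrib]
          exact Finset.sum_congr rfl fun s _ => by ring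
  have C_eq : ∑ i, ∑ j, G y i j * β y i * (-∑ s, β y s * pd j (fun z => X z s) y)
      = ∑ i, ∑ j, -((∑ s, G y i s * pd s (fun z => X z j) y) * β y i * β y j) := by
    have h := aux_swap23 (fun i j s => -(G y i j * β y i * (β y s * pd j (fun z => X z s) y)))
    calc ∑ i, ∑ j, G y i j * β y i * (-∑ s, β y s * pd j (fun z => X z s) y)
        = ∑ i, ∑ j, ∑ s, -(G y i j * β y i * (β y s * pd j (fun z => X z s) y)) := by
          refine Finset.sum_congr rfl fun i _ => Finset.sum_congr rfl fun j _ => ?_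
          rw [mul_neg, Finset.mul_sum, ← Finset.sum_neg_distrib]
      _ = ∑ i, ∑ j, ∑ s, -(G y i s * β y i * (β y j * pd s (fun z => X z j) y)) := h
      _ = ∑ i, ∑ j, -((∑ s, G y i s * pd s (fun z => X z j) y) * β y i * β y j) := by
          refine Finset.sum_congr rfl fun i _ => Finset.sum_congr rfl fun j _ => ?_
          rw [Finset.sum_mul, Finset.sum_mul, ← Finset.sum_neg_distrib]
          exact Finset.sum_congr rfl fun s _ => by ring
  calc fderiv ℝ (evCo G β β) y (X y)
      = ∑ i, ∑ j, (fderiv ℝ (fun z => G z i j) y (X y) * β y i * β y j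
        + G y i j * (-∑ s, β y s * pd i (fun z => X z s) y) * β y j
        + G y i j * β y i * (-∑ s, β y s * pd j (fun z => X z s) y)) := by
        rw [expand]
        simp only [ContinuousLinearMap.coe_sum', Finset.sum_apply]
        refine Finset.sum_congr rfl fun i _ => Finset.sum_congr rfl fun j _ => ?_
        rw [key i j, hβ' i, hβ' j]
    _ = evCo (lieCo X G) β β y := by
        simp only [evCo, lieCo, Matrix.of_apply, sub_mul, Finset.sum_sub_distrib,
          Finset.sum_add_distrib, B_eq, C_eq, Finset.sum_neg_distrib]
        ring

end Helpers


/-- The second directional derivative of `‖β‖² = g⁻¹(β,β)` along `α♯` at `x`,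
expressed via the second Lie derivative of the co-metric along a locally
constant extension `X_α` of `α♯(x)` (with `L_{X_α}β = 0` near `x`):
`α♯α♯(‖β‖²)(x) = (L²_{X_α}(g⁻¹))(β,β)(x) + ⟨D_x(α♯ − X_α).X_α(x), d(‖β‖²)(x)⟩`. -/
theorem second_derivative_via_lie {n : ℕ} (U : Set (Pt n)) (hU : IsOpen U)
    (g : Met n) (hg : IsRiemannOn U g)
    (α β : OneForm n) (hα : SmoothSec U α) (hβ : SmoothSec U β)
    (hcα : IsClosedOn U α) (hcβ : IsClosedOn U β)
    (x : Pt n) (hx : x ∈ U)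
    (Xa : VF n) (V : Set (Pt n)) (hV : IsOpen V) (hxV : x ∈ V) (hVU : V ⊆ U)
    (hXa : SmoothSec V Xa)
    (h1 : Xa x = sharp g α x)
    (h3 : ∀ y ∈ V, lieF Xa β y = 0) :
    dder (sharp g α) (dder (sharp g α) (gF g β β)) x =
      evCo (lieCo Xa (lieCo Xa (ginv g))) β β x
      + ∑ i, fderiv ℝ (fun y => (sharp g α y - Xa y : Fin n → ℝ)) x (Xa x) i
          * dF (gF g β β) x i := by
  classical
  set Y : VF n := sharp g α with hYdef
  set f : Pt n → ℝ := gF g β β with hfdef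
  have hone : ((⊤ : ℕ∞) : WithTop ℕ∞) ≠ 0 := by
    simp
  -- differentiability of β components
  have hβd : ∀ y ∈ U, ∀ i, DifferentiableAt ℝ (fun z => β z i) y := fun y hy i =>
    (((hβ i).contDiffAt (hU.mem_nhds hy)).of_le (by simp)).differentiableAt hone
  have hαd : ∀ y ∈ U, ∀ i, DifferentiableAt ℝ (fun z => α z i) y := fun y hy i =>
    (((hα i).contDiffAt (hU.mem_nhds hy)).of_le (by simp)).differentiableAt hone
  -- co-metric smoothness
  have hG0c : ∀ y ∈ U, ∀ i j, ContDiffAt ℝ (⊤ : ℕ∞) (fun z => ginv g z i j) y :=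
    fun y hy i j => aux_ginv_contDiffAt hU hg hy i j
  have hG0d : ∀ y ∈ U, ∀ i j, DifferentiableAt ℝ (fun z => ginv g z i j) y :=
    fun y hy i j => (hG0c y hy i j).differentiableAt hone
  have hinfty : ((⊤ : ℕ∞) : WithTop ℕ∞) + 1 ≤ ((⊤ : ℕ∞) : WithTop ℕ∞) := le_of_eq rfl
  -- second-order facts at x
  have hG0fd : ∀ i j, DifferentiableAt ℝ (fun y => fderiv ℝ (fun z => ginv g z i j) y) x :=
    fun i j => ((hG0c x hx i j).fderiv_right hinfty).differentiableAt hone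
  have hXad : ∀ y ∈ V, ∀ i, DifferentiableAt ℝ (fun z => Xa z i) y := fun y hy i =>
    (((hXa i).contDiffAt (hV.mem_nhds hy)).of_le (by simp)).differentiableAt hone
  have hXa2 : ∀ i, DifferentiableAt ℝ (fun y => fderiv ℝ (fun z => Xa z i) y) x :=
    fun i => ((((hXa i).contDiffAt (hV.mem_nhds hxV)).of_le
      (by simp)).fderiv_right hinfty).differentiableAt hone
  have hXapi : DifferentiableAt ℝ (fun y : Pt n => Xa y) x :=
    differentiableAt_pi.mpr fun i => hXad x hxV i
  -- f is smooth on U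
  have hfc : ∀ y ∈ U, ContDiffAt ℝ (⊤ : ℕ∞) f y := by
    intro y hy
    have : f = fun z => ∑ i, ∑ j, ginv g z i j * β z i * β z j := rfl
    rw [this]
    exact ContDiffAt.sum fun i _ => ContDiffAt.sum fun j _ =>
      ((hG0c y hy i j).mul (((hβ i).contDiffAt (hU.mem_nhds hy)).of_le (by simp))).mul
        (((hβ j).contDiffAt (hU.mem_nhds hy)).of_le (by simp))
  have hpdfd : ∀ i, DifferentiableAt ℝ (fun y => pd i f y) x := fun i =>
    (((hfc x hx).fderiv_right hinfty).differentiableAt hone).clm_apply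
      (differentiableAt_const _)
  -- Y components differentiable
  have hYd : ∀ y ∈ U, ∀ i, DifferentiableAt ℝ (fun z => Y z i) y := by
    intro y hy k
    have : (fun z => Y z k) = fun z => ∑ i, ginv g z i k * α z i := rfl
    rw [this]
    exact DifferentiableAt.fun_sum fun s _ => (hG0d y hy s k).mul (hαd y hy s)
  -- G1 = lieCo Xa (ginv g) entries differentiable at x
  have hG1d : ∀ i j, DifferentiableAt ℝ (fun y => lieCo Xa (ginv g) y i j) x := by
    intro i j
    have : (fun y => lieCo Xa (ginv g) y i j) = fun y =>
        fderiv ℝ (fun z => ginv g z i j) y (Xa y)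
          - ∑ s, ginv g y s j * fderiv ℝ (fun z => Xa z i) y (Pi.single s 1)
          - ∑ s, ginv g y i s * fderiv ℝ (fun z => Xa z j) y (Pi.single s 1) := rfl
    rw [this]
    refine DifferentiableAt.sub (DifferentiableAt.sub ?_ ?_) ?_
    · exact (hG0fd i j).clm_apply hXapi
    · exact DifferentiableAt.fun_sum fun s _ =>
        (hG0d x hx s j).mul ((hXa2 i).clm_apply (differentiableAt_const _))
    · exact DifferentiableAt.fun_sum fun s _ =>
        (hG0d x hx i s).mul ((hXa2 j).clm_apply (differentiableAt_const _))
  -- the eventual equality on V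
  have hEv : (fun y => fderiv ℝ f y (Xa y)) =ᶠ[nhds x] evCo (lieCo Xa (ginv g)) β β := by
    filter_upwards [hV.mem_nhds hxV] with y hy
    exact aux_dder_evCo (ginv g) β Xa y (fun i j => hG0d y (hVU hy) i j)
      (fun i => hβd y (hVU hy) i) (h3 y hy)
  have hG1ev : DifferentiableAt ℝ (evCo (lieCo Xa (ginv g)) β β) x := by
    have : evCo (lieCo Xa (ginv g)) β β
        = fun y => ∑ i, ∑ j, lieCo Xa (ginv g) y i j * β y i * β y j := rfl
    rw [this]
    exact DifferentiableAt.fun_sum fun i _ => DifferentiableAt.fun_sum fun j _ =>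
      ((hG1d i j).mul (hβd x hx i)).mul (hβd x hx j)
  have hA : DifferentiableAt ℝ (fun y => fderiv ℝ f y (Xa y)) x :=
    (hEv.differentiableAt_iff).mpr hG1ev
  have hBi : ∀ i, DifferentiableAt ℝ (fun y => (Y y i - Xa y i) * pd i f y) x := fun i =>
    ((hYd x hx i).sub (hXad x hxV i)).mul (hpdfd i)
  have hB : DifferentiableAt ℝ (fun y => ∑ i, (Y y i - Xa y i) * pd i f y) x :=
    DifferentiableAt.fun_sum fun i _ => hBi i
  -- decompose dder Y f
  have hsplit : dder Y f = fun y =>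
      fderiv ℝ f y (Xa y) + ∑ i, (Y y i - Xa y i) * pd i f y := by
    funext y
    have hv : ∀ v : Pt n, v = ∑ i, v i • (Pi.single i (1 : ℝ) : Pt n) := by
      intro v; funext j
      simp [Finset.sum_apply, Pi.single_apply, mul_ite]
    have hdec : ∀ v : Pt n, fderiv ℝ f y v = ∑ i, v i * pd i f y := by
      intro v
      conv_lhs => rw [hv v]
      rw [map_sum]
      simp [pd, smul_eq_mul]
    have hYy : Y y = Xa y + (Y y - Xa y) := by abel
    calc dder Y f y = fderiv ℝ f y (Y y) := rfl
      _ = fderiv ℝ f y (Xa y + (Y y - Xa y)) := by rw [← hYy]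
      _ = fderiv ℝ f y (Xa y) + fderiv ℝ f y (Y y - Xa y) := by rw [map_add]
      _ = fderiv ℝ f y (Xa y) + ∑ i, (Y y i - Xa y i) * pd i f y := by
          rw [hdec (Y y - Xa y)]
          simp [Pi.sub_apply]
  have hYx : Y x = Xa x := h1.symm
  -- the pi-valued derivative in the statement, componentwise
  have hpi : ∀ i, fderiv ℝ (fun y => (Y y - Xa y : Fin n → ℝ)) x (Xa x) i
      = fderiv ℝ (fun y => Y y i - Xa y i) x (Xa x) := by
    intro i
    have h0 : (fun y => (Y y - Xa y : Fin n → ℝ))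
        = fun y (i : Fin n) => Y y i - Xa y i := rfl
    rw [h0, fderiv_pi (fun i => (hYd x hx i).fun_sub (hXad x hxV i))]
    rfl
  -- main computation
  have main : dder Y (dder Y f) x
      = evCo (lieCo Xa (lieCo Xa (ginv g))) β β x
        + ∑ i, pd i f x * fderiv ℝ (fun y => Y y i - Xa y i) x (Xa x) := by
    calc dder Y (dder Y f) x = fderiv ℝ (dder Y f) x (Xa x) := by
          rw [dder, hYx]
      _ = fderiv ℝ (fun y => fderiv ℝ f y (Xa y) + ∑ i, (Y y i - Xa y i) * pd i f y)
            x (Xa x) := by rw [hsplit]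
      _ = fderiv ℝ (fun y => fderiv ℝ f y (Xa y)) x (Xa x)
          + fderiv ℝ (fun y => ∑ i, (Y y i - Xa y i) * pd i f y) x (Xa x) := by
          rw [fderiv_fun_add hA hB]; rfl
      _ = evCo (lieCo Xa (lieCo Xa (ginv g))) β β x
          + ∑ i, pd i f x * fderiv ℝ (fun y => Y y i - Xa y i) x (Xa x) := by
          congr 1
          · rw [hEv.fderiv_eq]
            exact aux_dder_evCo (lieCo Xa (ginv g)) β Xa x hG1d (hβd x hx) (h3 x hxV)
          · rw [fderiv_fun_sum fun i _ => hBi i]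
            rw [ContinuousLinearMap.sum_apply]
            refine Finset.sum_congr rfl fun i _ => ?_
            rw [fderiv_fun_mul ((hYd x hx i).fun_sub (hXad x hxV i)) (hpdfd i)]
            have hzero : Y x i - Xa x i = 0 := by rw [hYx]; ring
            simp only [ContinuousLinearMap.add_apply, ContinuousLinearMap.coe_smul',
              Pi.smul_apply, smul_eq_mul, hzero, zero_mul, zero_add]
  rw [main]
  congr 1
  refine Finset.sum_congr rfl fun i _ => ?_
  rw [hpi i]
  have : dF (gF g β β) x i = pd i f x := rfl
  rw [this, mul_comm]
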